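/- If a graph motif parameter φ(G) = Σ_i α_i · #Ind(H_i, G) with pairwise non-isomorphic patterns H_i has some non-integer rational coefficient α_j, and H is a pattern with non-integer coefficient of minimal vertex count among such patterns, then φ(H) is not an integer. -/

import Mathlib

/-! Write `φ(H j) = α j · #Ind(H j, H j) + Σ_{i ≠ j} α i · #Ind(H i, H j)`. The first term is
`α j`. In every other term either `α i` is an integer, or by minimality `H i` has at least as
many vertices as `H j` and, not being isomorphic to it, has no induced copy in `H j`. Hence
`φ(H j) - α j` is an integer, and so `φ(H j)` is not. -/

open SimpleGraph

/-- The number of induced copies of `H` in `G`. -/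
noncomputable def indCount {α β : Type*} (H : SimpleGraph α) (G : SimpleGraph β) : ℕ :=
  Nat.card {s : Finset β // Nonempty (H ≃g G.induce (s : Set β))}

namespace SimpleGraph

variable {α β : Type*} [Fintype α] {H : SimpleGraph α} {G : SimpleGraph β}

lemma card_eq_of_iso_induce {s : Finset β} (e : H ≃g G.induce (s : Set β)) :
    s.card = Fintype.card α := by
  simpa [Nat.card_coe_set_eq, Set.ncard_coe_finset] using (Nat.card_congr e.toEquiv).symm

lemma eq_univ_of_iso_induce [Fintype β] (hle : Fintype.card β ≤ Fintype.card α) {s : Finset β}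
    (e : H ≃g G.induce (s : Set β)) : s = Finset.univ :=
  Finset.eq_univ_of_card s (le_antisymm (Finset.card_le_univ s) (card_eq_of_iso_induce e ▸ hle))

def induceFinsetUnivIso [Fintype β] (G : SimpleGraph β) :
    G.induce ((Finset.univ : Finset β) : Set β) ≃g G :=
  Finset.coe_univ (α := β) ▸ induceUnivIso G

lemma indCount_self : indCount H H = 1 := by
  rw [indCount, Nat.card_eq_one_iff_unique]
  refine ⟨⟨fun ⟨s, ⟨e⟩⟩ ⟨t, ⟨f⟩⟩ => ?_⟩, ⟨⟨Finset.univ, ⟨(induceFinsetUnivIso H).symm⟩⟩⟩⟩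
  simp [eq_univ_of_iso_induce le_rfl e, eq_univ_of_iso_induce le_rfl f]

lemma indCount_eq_zero_of_card_le [Fintype β] (hle : Fintype.card β ≤ Fintype.card α)
    (hHG : IsEmpty (H ≃g G)) : indCount H G = 0 := by
  refine Nat.card_eq_zero.mpr (Or.inl ⟨fun ⟨s, ⟨e⟩⟩ => hHG.false ?_⟩)
  obtain rfl := eq_univ_of_iso_induce hle e
  exact e.trans (induceFinsetUnivIso G)

end SimpleGraph

lemma Finset.exists_int_eq_sum {ι R : Type*} [AddCommGroupWithOne R] (s : Finset ι) (f : ι → R)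
    (h : ∀ i ∈ s, ∃ z : ℤ, f i = z) : ∃ z : ℤ, ∑ i ∈ s, f i = z := by
  choose! g hg using h
  exact ⟨∑ i ∈ s, g i, by push_cast; exact Finset.sum_congr rfl hg⟩

/-- If a graph motif parameter `φ = Σ αᵢ · #Ind(Hᵢ, ·)` with pairwise non-isomorphic
patterns has a non-integer coefficient, and `H j` is a pattern with non-integer
coefficient of minimal vertex count among such patterns, then `φ(H j)` is not an
integer. -/
theorem stmt4 {s : ℕ} (n : Fin s → ℕ) (H : ∀ i, SimpleGraph (Fin (n i))) (α : Fin s → ℚ)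
    (hni : ∀ i j, i ≠ j → IsEmpty (H i ≃g H j))
    (j : Fin s) (hj : ¬∃ z : ℤ, α j = (z : ℚ))
    (hmin : ∀ i, (¬∃ z : ℤ, α i = (z : ℚ)) → n j ≤ n i) :
    ¬∃ z : ℤ, ∑ i, α i * (indCount (H i) (H j) : ℚ) = (z : ℚ) := by
  rintro ⟨z, hz⟩
  obtain ⟨w, hw⟩ : ∃ w : ℤ,
      ∑ i ∈ Finset.univ.erase j, α i * (indCount (H i) (H j) : ℚ) = w := by
    refine Finset.exists_int_eq_sum _ _ fun i hi => ?_
    by_cases hαi : ∃ w : ℤ, α i = w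
    · obtain ⟨w, hw⟩ := hαi
      exact ⟨w * indCount (H i) (H j), by simp [hw]⟩
    · rw [indCount_eq_zero_of_card_le (by simpa using hmin i hαi)
        (hni i j (Finset.ne_of_mem_erase hi))]
      exact ⟨0, by simp⟩
  rw [← Finset.add_sum_erase _ _ (Finset.mem_univ j), indCount_self, Nat.cast_one, mul_one, hw]
    at hz
  exact hj ⟨z - w, by push_cast; linarith⟩
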